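/- For every positive integer m there exists a temporal graph 𝒢 with connected underlying graph whose TIM width is at most 2 and whose bidirectional connected-VIM width is at least m. In particular, the bidirectional connected-VIM width of a temporal graph can be arbitrarily larger than its TIM width. -/

import Mathlib

variable {V : Type} [Fintype V] [DecidableEq V]

/-- The snapshot of a temporal graph `(G, lam)` at time `t`: the static graph on `V`
whose edges are the edges of `G` active at time `t`. -/
def snapshot (G : SimpleGraph V) (lam : Sym2 V → Finset ℕ) (t : ℕ) : SimpleGraph V where
  Adj u v := G.Adj u v ∧ t ∈ lam s(u, v)
  symm := by
    constructor
    rintro u v ⟨h1, h2⟩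
    exact ⟨h1.symm, by rwa [Sym2.eq_swap]⟩
  loopless := ⟨fun v h => G.loopless.irrefl v h.1⟩

/-- The undirected graph underlying the (uniquely determined) arc structure of a
candidate TIM decomposition: nodes `i` and `j` are adjacent iff their bags intersect
and their times are consecutive. -/
def timTree {ι : Type} (B : ι → Finset V) (τ : ι → ℕ) : SimpleGraph ι where
  Adj i j := (B i ∩ B j).Nonempty ∧ (τ j = τ i + 1 ∨ τ i = τ j + 1)
  symm := by
    constructor
    rintro i j ⟨h1, h2⟩
    exact ⟨by rwa [Finset.inter_comm], h2.symm⟩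
  loopless := by
    constructor
    rintro i ⟨-, h⟩
    rcases h with h | h <;> omega

/-- `(i, j)` is an arc of the TIM decomposition: the bags intersect and
`τ j = τ i + 1`. -/
def timArc {ι : Type} (B : ι → Finset V) (τ : ι → ℕ) (i j : ι) : Prop :=
  (B i ∩ B j).Nonempty ∧ τ j = τ i + 1

/-- `(ι, B, τ)` is a TIM decomposition of the temporal graph `(G, lam)` with lifetime `Λ`:
every time label lies in `{1, …, Λ}`; every vertex lies in exactly one bag with each time
label; every time-edge is contained in a bag with the corresponding time label; and the
graph on the nodes whose (undirected) edges correspond to the arcs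
`{(i, j) : B i ∩ B j ≠ ∅ ∧ τ j = τ i + 1}` is a tree. -/
def IsTIMDecomp (G : SimpleGraph V) (lam : Sym2 V → Finset ℕ) (Λ : ℕ)
    {ι : Type} (B : ι → Finset V) (τ : ι → ℕ) : Prop :=
  (∀ i, τ i ∈ Finset.Icc 1 Λ) ∧
  (∀ v : V, ∀ t ∈ Finset.Icc 1 Λ, ∃! i, τ i = t ∧ v ∈ B i) ∧
  (∀ e ∈ G.edgeSet, ∀ t ∈ lam e, ∃ i, τ i = t ∧ ∀ v ∈ e, v ∈ B i) ∧
  (timTree B τ).IsTree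

/-- The bag `F_t` of the VIM sequence: vertices `v` with edges `vu`, `vw` such that
`min λ(vu) ≤ t ≤ max λ(vw)`. -/
def vimBag (G : SimpleGraph V) (lam : Sym2 V → Finset ℕ) (t : ℕ) : Set V :=
  {v | ∃ u w, G.Adj v u ∧ G.Adj v w ∧
    (∃ t1 ∈ lam s(v, u), t1 ≤ t) ∧ (∃ t2 ∈ lam s(v, w), t ≤ t2)}

/-- `G_≤(t)`: the static graph on `V` whose edges are those active at some time `≤ t`. -/
def GLe (G : SimpleGraph V) (lam : Sym2 V → Finset ℕ) (t : ℕ) : SimpleGraph V where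
  Adj u v := G.Adj u v ∧ ∃ t' ∈ lam s(u, v), t' ≤ t
  symm := by
    constructor
    rintro u v ⟨h1, h2⟩
    exact ⟨h1.symm, by rwa [Sym2.eq_swap]⟩
  loopless := ⟨fun v h => G.loopless.irrefl v h.1⟩

/-- `G_≥(t)`: the static graph on `V` whose edges are those active at some time `≥ t`. -/
def GGe (G : SimpleGraph V) (lam : Sym2 V → Finset ℕ) (t : ℕ) : SimpleGraph V where
  Adj u v := G.Adj u v ∧ ∃ t' ∈ lam s(u, v), t ≤ t'
  symm := by
    constructor
    rintro u v ⟨h1, h2⟩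
    exact ⟨h1.symm, by rwa [Sym2.eq_swap]⟩
  loopless := ⟨fun v h => G.loopless.irrefl v h.1⟩

/-- The `≤`-connected-VIM width `ψ_≤`: the maximum over times `t ∈ {1, …, Λ}` and
connected components `C` of `G_≤(t)` of `|V(C) ∩ F_t|`. -/
noncomputable def psiLe (G : SimpleGraph V) (lam : Sym2 V → Finset ℕ) (Λ : ℕ) : ℕ :=
  sSup {n : ℕ | ∃ t, 1 ≤ t ∧ t ≤ Λ ∧
    ∃ C : (GLe G lam t).ConnectedComponent, n = (C.supp ∩ vimBag G lam t).ncard}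

/-- The `≥`-connected-VIM width `ψ_≥`. -/
noncomputable def psiGe (G : SimpleGraph V) (lam : Sym2 V → Finset ℕ) (Λ : ℕ) : ℕ :=
  sSup {n : ℕ | ∃ t, 1 ≤ t ∧ t ≤ Λ ∧
    ∃ C : (GGe G lam t).ConnectedComponent, n = (C.supp ∩ vimBag G lam t).ncard}

/-- The temporal graph `(G, lam)` with lifetime `Λ` has TIM width at most `k`,
i.e. it admits a TIM decomposition all of whose bags have cardinality at most `k`. -/
def TIMwidthLE (G : SimpleGraph V) (lam : Sym2 V → Finset ℕ) (Λ : ℕ) (k : ℕ) : Prop :=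
  ∃ (m : ℕ) (B : Fin m → Finset V) (τ : Fin m → ℕ),
    IsTIMDecomp G lam Λ B τ ∧ ∀ i, (B i).card ≤ k


/-- The restriction `𝒢_≤(t)` of a temporal assignment to time-edges with time at most `t`. -/
def lamUpTo (lam : Sym2 V → Finset ℕ) (t : ℕ) : Sym2 V → Finset ℕ :=
  fun e => (lam e).filter (· ≤ t)

/-- The restriction `𝒢_≥(t)` of a temporal assignment to time-edges with time at least `t`. -/
def lamFrom (lam : Sym2 V → Finset ℕ) (t : ℕ) : Sym2 V → Finset ℕ :=
  fun e => (lam e).filter (t ≤ ·)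

/-- `ψ∼(t)`: equal to `ψ_≥(𝒢)` for `t = 1`, to `ψ_≤(𝒢)` for `t = Λ`, and to
`max {ψ_≤(𝒢_≤(t−1)), ψ_≥(𝒢_≥(t+1)), |F_t|}` for `1 < t < Λ`. -/
noncomputable def psiSim (G : SimpleGraph V) (lam : Sym2 V → Finset ℕ) (Λ : ℕ) (t : ℕ) : ℕ :=
  if t = 1 then psiGe G lam Λ
  else if t = Λ then psiLe G lam Λ
  else
    max (max (psiLe G (lamUpTo lam (t - 1)) Λ) (psiGe G (lamFrom lam (t + 1)) Λ))
      (vimBag G lam t).ncard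

/-- The bidirectional connected-VIM width: `min_{1 ≤ t ≤ Λ} ψ∼(t)`. -/
noncomputable def psiBi (G : SimpleGraph V) (lam : Sym2 V → Finset ℕ) (Λ : ℕ) : ℕ :=
  sInf {n : ℕ | ∃ t, 1 ≤ t ∧ t ≤ Λ ∧ n = psiSim G lam Λ t}




open SimpleGraph

/-- A graph on `Fin N` whose adjacency is "ranks differ by one" for a rank
bijection `g` is a tree (it is a path). -/
lemma isTree_of_rank {N : ℕ} (hN : 0 < N) (G : SimpleGraph (Fin N)) (g : Fin N → ℕ)
    (hlt : ∀ i, g i < N)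
    (hinj : ∀ i j, g i = g j → i = j)
    (hsurj : ∀ k, k < N → ∃ i, g i = k)
    (hadj : ∀ i j, G.Adj i j ↔ g j = g i + 1 ∨ g i = g j + 1) :
    G.IsTree := by
  obtain ⟨i0, hi0⟩ := hsurj 0 hN
  haveI : Nonempty (Fin N) := ⟨i0⟩
  have key : ∀ k, ∀ i : Fin N, g i = k → G.Reachable i i0 := by
    intro k
    induction k with
    | zero =>
      intro i hi
      have : i = i0 := hinj _ _ (hi.trans hi0.symm)
      exact this ▸ Reachable.refl _
    | succ k ih =>
      intro i hi
      have hk : k < N := by have := hlt i; omega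
      obtain ⟨j, hj⟩ := hsurj k hk
      have hadj' : G.Adj j i := (hadj j i).2 (Or.inl (by omega))
      exact (hadj'.symm.reachable).trans (ih j hj)
  constructor
  · exact ⟨fun u v => (key _ u rfl).trans (key _ v rfl).symm⟩
  · rw [isAcyclic_iff_forall_adj_isBridge]
    intro v w hvw
    rw [isBridge_iff]
    intro hreach
    set a : ℕ := min (g v) (g w) with ha
    have hgvw := (hadj v w).1 hvw
    have main : ∀ x y : Fin N, G.Adj x y → ¬ (s(x,y) = s(v,w)) → g x ≤ a → g y ≤ a := by
      intro x y hxy hne hx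
      by_contra hy
      have hgxy := (hadj x y).1 hxy
      have hx' : g x = a := by omega
      have hy' : g y = a + 1 := by omega
      have : (x = v ∧ y = w) ∨ (x = w ∧ y = v) := by
        rcases hgvw with h | h
        · exact Or.inl ⟨hinj _ _ (by omega), hinj _ _ (by omega)⟩
        · exact Or.inr ⟨hinj _ _ (by omega), hinj _ _ (by omega)⟩
      rcases this with ⟨rfl, rfl⟩ | ⟨rfl, rfl⟩
      · exact hne rfl
      · exact hne (Sym2.eq_swap)
    have hcross : ∀ x y : Fin N, (G \ fromEdgeSet {s(v,w)}).Adj x y → (g x ≤ a → g y ≤ a) := by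
      intro x y hxy
      have h1 : G.Adj x y ∧ ¬ (s(x,y) = s(v,w)) := by
        rw [sdiff_adj, fromEdgeSet_adj] at hxy
        refine ⟨hxy.1, fun h => hxy.2 ⟨by simpa using h, hxy.1.ne⟩⟩
      exact main x y h1.1 h1.2
    have hwalk : ∀ {x y : Fin N} (_ : (G \ fromEdgeSet {s(v,w)}).Walk x y), g x ≤ a → g y ≤ a := by
      intro x y p
      induction p with
      | nil => exact id
      | cons h p ih => intro hx; exact ih (hcross _ _ h hx)
    rcases hgvw with h | h
    · have := hwalk hreach.some (by omega)
      omega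
    · have := hwalk hreach.some.reverse (by omega)
      omega

/-- The temporal assignment: a path edge gets time 1 if its lower endpoint is even,
time 2 if odd. -/
def stmtLam (m : ℕ) : Sym2 (Fin (2*m+2)) → Finset ℕ :=
  Sym2.lift ⟨fun u v => if u.val+1 = v.val ∨ v.val+1 = u.val then {1 + min u.val v.val % 2} else ∅,
    by intro u v; dsimp only; rw [Nat.min_comm]; exact if_congr or_comm rfl rfl⟩

lemma stmtLam_mk (m : ℕ) (u v : Fin (2*m+2)) :
    stmtLam m s(u,v)
      = if u.val+1 = v.val ∨ v.val+1 = u.val then {1 + min u.val v.val % 2} else ∅ := rfl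

def stmtB (m : ℕ) : Fin (2*m+3) → Finset (Fin (2*m+2)) :=
  fun i => Finset.univ.filter
    (fun v => if i.val ≤ m then v.val / 2 = i.val else (v.val+1)/2 + (m+1) = i.val)

def stmtTau (m : ℕ) : Fin (2*m+3) → ℕ := fun i => if i.val ≤ m then 1 else 2

lemma mem_stmtB (m : ℕ) (i : Fin (2*m+3)) (v : Fin (2*m+2)) :
    v ∈ stmtB m i ↔
      (if i.val ≤ m then v.val / 2 = i.val else (v.val+1)/2 + (m+1) = i.val) := by
  simp [stmtB]

def stmtG (m : ℕ) : SimpleGraph (Fin (2*m+2)) := SimpleGraph.pathGraph (2*m+2)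

lemma stmtG_adj (m : ℕ) (u v : Fin (2*m+2)) :
    (stmtG m).Adj u v ↔ u.val + 1 = v.val ∨ v.val + 1 = u.val := pathGraph_adj

lemma stmtLam_of_adj (m : ℕ) (u v : Fin (2*m+2)) (h : u.val + 1 = v.val ∨ v.val + 1 = u.val) :
    stmtLam m s(u,v) = {1 + min u.val v.val % 2} := by
  rw [stmtLam_mk, if_pos h]
-- TIM decomposition part
lemma stmt_timwidth (m : ℕ) : TIMwidthLE (stmtG m) (stmtLam m) 2 2 := by
  refine ⟨2*m+3, stmtB m, stmtTau m, ⟨?_, ?_, ?_, ?_⟩, ?_⟩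
  · -- times in Icc 1 2
    intro i
    simp only [stmtTau]
    split <;> simp
  · -- every vertex in exactly one bag per time
    intro v t ht
    simp only [Finset.mem_Icc] at ht
    obtain ⟨ht1, ht2⟩ := ht
    have hv := v.isLt
    interval_cases t
    · refine ⟨⟨v.val / 2, by omega⟩, ⟨?_, ?_⟩, ?_⟩
      · simp only [stmtTau]; rw [if_pos (by first | omega | (simp only [Fin.val_mk] <;> omega))]
      · rw [mem_stmtB, if_pos (by first | omega | (simp only [Fin.val_mk] <;> omega))]
        try simp only [Fin.val_mk]
      · rintro i ⟨h1, h2⟩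
        simp only [stmtTau] at h1
        rw [mem_stmtB] at h2
        by_cases him : i.val ≤ m
        · rw [if_pos him] at h2
          apply Fin.ext; first | omega | (simp only [Fin.val_mk] <;> omega)
        · rw [if_neg him] at h1; omega
    · refine ⟨⟨(v.val+1) / 2 + (m+1), by omega⟩, ⟨?_, ?_⟩, ?_⟩
      · simp only [stmtTau]; rw [if_neg (by first | omega | (simp only [Fin.val_mk] <;> omega))]
      · rw [mem_stmtB, if_neg (by first | omega | (simp only [Fin.val_mk] <;> omega))]
        try simp only [Fin.val_mk]
      · rintro i ⟨h1, h2⟩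
        simp only [stmtTau] at h1
        rw [mem_stmtB] at h2
        by_cases him : i.val ≤ m
        · rw [if_pos him] at h1; omega
        · rw [if_neg him] at h2
          apply Fin.ext; first | omega | (simp only [Fin.val_mk] <;> omega)
  · -- time-edges in bags
    intro e he t hte
    induction e with
    | _ u v =>
      rw [SimpleGraph.mem_edgeSet, stmtG_adj] at he
      rw [stmtLam_of_adj m u v he] at hte
      simp only [Finset.mem_singleton] at hte
      subst hte
      have hv := v.isLt
      have hu := u.isLt
      have hkey : ∀ w : Fin (2*m+2), w = u ∨ w = v →
          (min u.val v.val % 2 = 0 → w.val / 2 = min u.val v.val / 2) ∧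
          (min u.val v.val % 2 = 1 → (w.val + 1) / 2 = (min u.val v.val + 1) / 2) := by
        rintro w (rfl | rfl) <;> constructor <;> intro hp <;> omega
      by_cases hpar : min u.val v.val % 2 = 0
      · refine ⟨⟨min u.val v.val / 2, by omega⟩, ?_, ?_⟩
        · simp only [stmtTau]; rw [if_pos (by first | omega | (simp only [Fin.val_mk] <;> omega))]; omega
        · intro w hw
          rw [Sym2.mem_iff] at hw
          rw [mem_stmtB, if_pos (by first | omega | (simp only [Fin.val_mk] <;> omega))]
          try simp only [Fin.val_mk]
          try exact (hkey w hw).1 hpar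
      · refine ⟨⟨(min u.val v.val + 1) / 2 + (m+1), by omega⟩, ?_, ?_⟩
        · simp only [stmtTau]; rw [if_neg (by first | omega | (simp only [Fin.val_mk] <;> omega))]; omega
        · intro w hw
          rw [Sym2.mem_iff] at hw
          rw [mem_stmtB, if_neg (by first | omega | (simp only [Fin.val_mk] <;> omega))]
          try simp only [Fin.val_mk]
          have := (hkey w hw).2 (by omega)
          omega
  · -- tree
    apply isTree_of_rank (by omega) _
      (fun i : Fin (2*m+3) => if i.val ≤ m then 2*i.val + 1 else 2*(i.val - (m+1)))
    · intro i; have := i.isLt; (try dsimp only); split <;> omega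
    · intro i j hij
      have hi := i.isLt; have hj := j.isLt
      apply Fin.ext
      revert hij; (try dsimp only); split <;> split <;> omega
    · intro k hk
      by_cases hpar : k % 2 = 1
      · refine ⟨⟨k/2, by omega⟩, ?_⟩
        try dsimp only
        rw [if_pos (by first | omega | (simp only [Fin.val_mk] <;> omega))]
        first | omega | (simp only [Fin.val_mk] <;> omega)
      · refine ⟨⟨k/2 + (m+1), by omega⟩, ?_⟩
        try dsimp only
        rw [if_neg (by first | omega | (simp only [Fin.val_mk] <;> omega))]
        first | omega | (simp only [Fin.val_mk] <;> omega)
    · intro i j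
      have hi := i.isLt; have hj := j.isLt
      constructor
      · rintro ⟨⟨v, hv⟩, htau⟩
        rw [Finset.mem_inter, mem_stmtB, mem_stmtB] at hv
        simp only [stmtTau] at htau
        have hvlt := v.isLt
        try dsimp only
        split_ifs at hv htau ⊢ <;> omega
      · intro hg
        try dsimp only at hg
        by_cases him : i.val ≤ m <;> by_cases hjm : j.val ≤ m
        · rw [if_pos him, if_pos hjm] at hg; omega
        · rw [if_pos him, if_neg hjm] at hg
          constructor
          · have hex : ∃ v : Fin (2*m+2), v.val / 2 = i.val ∧ (v.val+1)/2 + (m+1) = j.val := by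
              rcases hg with h | h
              · refine ⟨⟨2*i.val+1, by omega⟩, ?_, ?_⟩ <;> (first | omega | (simp only [Fin.val_mk] <;> omega))
              · refine ⟨⟨2*i.val, by omega⟩, ?_, ?_⟩ <;> (first | omega | (simp only [Fin.val_mk] <;> omega))
            obtain ⟨v, h1, h2⟩ := hex
            exact ⟨v, by rw [Finset.mem_inter, mem_stmtB, mem_stmtB, if_pos him, if_neg hjm]; exact ⟨h1, h2⟩⟩
          · simp only [stmtTau]; rw [if_pos him, if_neg hjm]; left; rfl
        · rw [if_neg him, if_pos hjm] at hg
          constructor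
          · have hex : ∃ v : Fin (2*m+2), (v.val+1)/2 + (m+1) = i.val ∧ v.val / 2 = j.val := by
              rcases hg with h | h
              · refine ⟨⟨2*j.val, by omega⟩, ?_, ?_⟩ <;> (first | omega | (simp only [Fin.val_mk] <;> omega))
              · refine ⟨⟨2*j.val+1, by omega⟩, ?_, ?_⟩ <;> (first | omega | (simp only [Fin.val_mk] <;> omega))
            obtain ⟨v, h1, h2⟩ := hex
            exact ⟨v, by rw [Finset.mem_inter, mem_stmtB, mem_stmtB, if_neg him, if_pos hjm]; exact ⟨h1, h2⟩⟩
          · simp only [stmtTau]; rw [if_neg him, if_pos hjm]; right; rfl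
        · rw [if_neg him, if_neg hjm] at hg; omega
  · -- card ≤ 2
    intro i
    have h2 : (stmtB m i).card ≤ (Finset.univ : Finset (Fin 2)).card := by
      apply Finset.card_le_card_of_injOn (fun v => (⟨v.val % 2, by omega⟩ : Fin 2))
      · intro a _; exact Finset.mem_univ _
      · intro a ha b hb hab
        rw [Finset.mem_coe, mem_stmtB] at ha hb
        have hab' : a.val % 2 = b.val % 2 := congrArg Fin.val hab
        apply Fin.ext
        revert ha hb; split <;> omega
    simpa using h2
lemma stmtG_connected (m : ℕ) : (stmtG m).Connected := pathGraph_connected (2*m+1)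

lemma stmt_GGe (m : ℕ) : GGe (stmtG m) (stmtLam m) 1 = stmtG m := by
  ext u v
  show (stmtG m).Adj u v ∧ (∃ t' ∈ stmtLam m s(u, v), 1 ≤ t') ↔ (stmtG m).Adj u v
  constructor
  · rintro ⟨h, -⟩; exact h
  · intro h
    refine ⟨h, 1 + min u.val v.val % 2, ?_, by omega⟩
    rw [stmtLam_of_adj m u v ((stmtG_adj m u v).1 h)]
    exact Finset.mem_singleton_self _
lemma stmt_GLe (m : ℕ) : GLe (stmtG m) (stmtLam m) 2 = stmtG m := by
  ext u v
  show (stmtG m).Adj u v ∧ (∃ t' ∈ stmtLam m s(u, v), t' ≤ 2) ↔ (stmtG m).Adj u v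
  constructor
  · rintro ⟨h, -⟩; exact h
  · intro h
    refine ⟨h, 1 + min u.val v.val % 2, ?_, by omega⟩
    rw [stmtLam_of_adj m u v ((stmtG_adj m u v).1 h)]
    exact Finset.mem_singleton_self _

lemma supp_univ {W : Type} (H : SimpleGraph W) (h : H.Connected) (x : W) :
    (H.connectedComponentMk x).supp = Set.univ :=
  Set.eq_univ_of_forall fun v =>
    (SimpleGraph.ConnectedComponent.mem_supp_iff _ _).2
      (SimpleGraph.ConnectedComponent.sound (h.preconnected v x))

lemma stmt_mem_vimBag (m : ℕ) (v u : Fin (2*m+2)) (t : ℕ)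
    (hadj : (stmtG m).Adj v u) (ht : t ∈ stmtLam m s(v,u)) :
    v ∈ vimBag (stmtG m) (stmtLam m) t :=
  ⟨u, u, hadj, hadj, ⟨t, ht, le_rfl⟩, ⟨t, ht, le_rfl⟩⟩

lemma stmt_nbr1 (m : ℕ) (v : Fin (2*m+2)) :
    ∃ u, (stmtG m).Adj v u ∧ 1 ∈ stmtLam m s(v,u) := by
  have hv := v.isLt
  by_cases hp : v.val % 2 = 0
  · refine ⟨⟨v.val + 1, by omega⟩, ?_, ?_⟩
    · rw [stmtG_adj]; left; first | omega | (simp only [Fin.val_mk] <;> omega)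
    · rw [stmtLam_of_adj m _ _ (by left; first | omega | (simp only [Fin.val_mk] <;> omega))]
      simp only [Finset.mem_singleton]
      first | omega | (simp only [Fin.val_mk] <;> omega)
  · refine ⟨⟨v.val - 1, by omega⟩, ?_, ?_⟩
    · rw [stmtG_adj]; right; first | omega | (simp only [Fin.val_mk] <;> omega)
    · rw [stmtLam_of_adj m _ _ (by right; first | omega | (simp only [Fin.val_mk] <;> omega))]
      simp only [Finset.mem_singleton]
      first | omega | (simp only [Fin.val_mk] <;> omega)

lemma stmt_nbr2 (m : ℕ) (v : Fin (2*m+2)) (h1 : 1 ≤ v.val) (h2 : v.val ≤ 2*m) :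
    ∃ u, (stmtG m).Adj v u ∧ 2 ∈ stmtLam m s(v,u) := by
  have hv := v.isLt
  by_cases hp : v.val % 2 = 1
  · refine ⟨⟨v.val + 1, by omega⟩, ?_, ?_⟩
    · rw [stmtG_adj]; left; first | omega | (simp only [Fin.val_mk] <;> omega)
    · rw [stmtLam_of_adj m _ _ (by left; first | omega | (simp only [Fin.val_mk] <;> omega))]
      simp only [Finset.mem_singleton]
      first | omega | (simp only [Fin.val_mk] <;> omega)
  · refine ⟨⟨v.val - 1, by omega⟩, ?_, ?_⟩
    · rw [stmtG_adj]; right; first | omega | (simp only [Fin.val_mk] <;> omega)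
    · rw [stmtLam_of_adj m _ _ (by right; first | omega | (simp only [Fin.val_mk] <;> omega))]
      simp only [Finset.mem_singleton]
      first | omega | (simp only [Fin.val_mk] <;> omega)

lemma stmt_vimBag1 (m : ℕ) : vimBag (stmtG m) (stmtLam m) 1 = Set.univ := by
  apply Set.eq_univ_of_forall
  intro v
  obtain ⟨u, hu, ht⟩ := stmt_nbr1 m v
  exact stmt_mem_vimBag m v u 1 hu ht

lemma stmt_psi_bdd (m : ℕ) (S : Set ℕ)
    (hS : ∀ n ∈ S, ∃ s : Set (Fin (2*m+2)), n = s.ncard) : BddAbove S := by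
  refine ⟨2*m+2, fun n hn => ?_⟩
  obtain ⟨s, rfl⟩ := hS n hn
  calc s.ncard ≤ (Set.univ : Set (Fin (2*m+2))).ncard :=
        Set.ncard_le_ncard (Set.subset_univ _) Set.finite_univ
    _ = 2*m+2 := by rw [Set.ncard_univ, Nat.card_eq_fintype_card, Fintype.card_fin]

lemma stmt_psiGe (m : ℕ) : 2*m+2 ≤ psiGe (stmtG m) (stmtLam m) 2 := by
  apply le_csSup (stmt_psi_bdd m _ (by rintro n ⟨t, -, -, C, rfl⟩; exact ⟨_, rfl⟩))
  refine ⟨1, le_rfl, by omega,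
    (GGe (stmtG m) (stmtLam m) 1).connectedComponentMk ⟨0, by omega⟩, ?_⟩
  have hconn : (GGe (stmtG m) (stmtLam m) 1).Connected := by
    rw [stmt_GGe]; exact stmtG_connected m
  rw [supp_univ _ hconn, stmt_vimBag1, Set.univ_inter, Set.ncard_univ,
    Nat.card_eq_fintype_card, Fintype.card_fin]

lemma stmt_psiLe (m : ℕ) : m ≤ psiLe (stmtG m) (stmtLam m) 2 := by
  have hconn : (GLe (stmtG m) (stmtLam m) 2).Connected := by
    rw [stmt_GLe]; exact stmtG_connected m
  set C := (GLe (stmtG m) (stmtLam m) 2).connectedComponentMk ⟨0, by omega⟩ with hC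
  have hval : m ≤ (C.supp ∩ vimBag (stmtG m) (stmtLam m) 2).ncard := by
    rw [hC, supp_univ _ hconn, Set.univ_inter]
    have hf : Function.Injective (fun k : Fin m => (⟨k.val + 1, by omega⟩ : Fin (2*m+2))) := by
      intro a b hab
      apply Fin.ext
      have h := congrArg Fin.val hab
      simp only [Fin.val_mk] at h ⊢
      omega
    have hsub : Set.range (fun k : Fin m => (⟨k.val + 1, by omega⟩ : Fin (2*m+2)))
        ⊆ vimBag (stmtG m) (stmtLam m) 2 := by
      rintro v ⟨k, rfl⟩
      have hk := k.isLt
      obtain ⟨u, hu, ht⟩ := stmt_nbr2 m ⟨k.val + 1, by omega⟩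
        (by first | omega | (simp only [Fin.val_mk] <;> omega))
        (by first | omega | (simp only [Fin.val_mk] <;> omega))
      exact stmt_mem_vimBag m _ u 2 hu ht
    calc m = (Set.range (fun k : Fin m => (⟨k.val + 1, by omega⟩ : Fin (2*m+2)))).ncard := by
          rw [← Nat.card_coe_set_eq, Nat.card_range_of_injective hf,
            Nat.card_eq_fintype_card, Fintype.card_fin]
      _ ≤ _ := Set.ncard_le_ncard hsub (Set.toFinite _)
  exact le_trans hval
    (le_csSup (stmt_psi_bdd m _ (by rintro n ⟨t, -, -, D, rfl⟩; exact ⟨_, rfl⟩))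
      ⟨2, by omega, le_rfl, C, rfl⟩)
/-- For every positive integer `m` there is a temporal graph with
connected underlying graph whose TIM width is at most `2` and whose bidirectional
connected-VIM width is at least `m`. -/
theorem stmt_10 (m : ℕ) (hm : 1 ≤ m) :
    ∃ (n : ℕ) (G : SimpleGraph (Fin n)) (lam : Sym2 (Fin n) → Finset ℕ) (Λ : ℕ),
      (∀ e ∈ G.edgeSet, (lam e).Nonempty) ∧
      (∀ e, e ∉ G.edgeSet → lam e = ∅) ∧
      (∀ e, ∀ t ∈ lam e, 1 ≤ t ∧ t ≤ Λ) ∧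
      (∃ e ∈ G.edgeSet, Λ ∈ lam e) ∧
      G.Connected ∧
      TIMwidthLE G lam Λ 2 ∧
      m ≤ psiBi G lam Λ := by
  
  refine ⟨2*m+2, stmtG m, stmtLam m, 2, ?_, ?_, ?_, ?_, stmtG_connected m, stmt_timwidth m, ?_⟩
  · -- nonempty on edges
    intro e he
    induction e with
    | _ u v =>
      rw [SimpleGraph.mem_edgeSet, stmtG_adj] at he
      rw [stmtLam_of_adj m u v he]
      exact ⟨_, Finset.mem_singleton_self _⟩
  · -- empty off edges
    intro e he
    induction e with
    | _ u v =>
      rw [SimpleGraph.mem_edgeSet, stmtG_adj] at he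
      rw [stmtLam_mk, if_neg he]
  · -- times in [1,2]
    intro e t ht
    induction e with
    | _ u v =>
      rw [stmtLam_mk] at ht
      split at ht
      · rw [Finset.mem_singleton] at ht; omega
      · simp at ht
  · -- 2 is attained
    refine ⟨s((⟨1, by omega⟩ : Fin (2*m+2)), (⟨2, by omega⟩ : Fin (2*m+2))), ?_, ?_⟩
    · rw [SimpleGraph.mem_edgeSet, stmtG_adj]
      left
      first | omega | (simp only [Fin.val_mk] <;> omega)
    · rw [stmtLam_of_adj m _ _ (by left; first | omega | (simp only [Fin.val_mk] <;> omega))]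
      rw [Finset.mem_singleton]
      first | omega | (simp only [Fin.val_mk] <;> omega)
  · -- m ≤ psiBi
    apply le_csInf
    · exact ⟨psiSim (stmtG m) (stmtLam m) 2 1, 1, le_rfl, by omega, rfl⟩
    · rintro b ⟨t, ht1, ht2, rfl⟩
      interval_cases t
      · rw [psiSim, if_pos rfl]
        exact le_trans (by omega) (stmt_psiGe m)
      · rw [psiSim, if_neg (by omega), if_pos rfl]
        exact stmt_psiLe m
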